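/- arXiv:2004.07162 — 2 statements merged into one kernel-verified Lean document; each statement's English description precedes it below -/
import Mathlib

section
/- Let ν be a probability measure with finite p-th moment on a proper Polish space X, r > 0, and f : X → ℝ upper semicontinuous such that sup{∫ f dμ : μ ∈ B_r(ν)} < ∞ (where the integrals are well-defined for all μ ∈ B_r(ν)). Then there exist x₀ ∈ X and c > 0 such that f(x) ≤ c(1 + d(x, x₀)^p) for all x ∈ X. -/
open MeasureTheory ENNReal

noncomputable def Couplings {X : Type*} [MeasurableSpace X]
    (μ ν : MeasureTheory.Measure X) : Set (MeasureTheory.Measure (X × X)) :=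
  {γ | γ.map Prod.fst = μ ∧ γ.map Prod.snd = ν}

/-- The `p`-Wasserstein distance, defined as the infimum over couplings of the `p`-th root of the
transport cost `∫ d(x₁,x₂)^p dγ`. -/
noncomputable def Wp {X : Type*} [MeasurableSpace X] [PseudoEMetricSpace X] (p : ℝ)
    (μ ν : MeasureTheory.Measure X) : ℝ≥0∞ :=
  ⨅ γ ∈ Couplings μ ν, (∫⁻ z, edist z.1 z.2 ^ p ∂γ) ^ (1 / p)

open Filter Topology TopologicalSpace

/-!
Push `ν` forward by a simple function `T` (an `approxOn` of the identity) whose transport cost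
`∫ d(T x, x) ^ p dν` is at most `r ^ p / 2`. Since `T` takes finitely many values,
`S = ∫ f ∘ T dν` is a genuine finite integral, not a junk value. For any `y`, the mixture
`(1 - ε) T₊ν + ε δ_y` is coupled to `ν` at cost at most `r ^ p / 2 + ε ∫ d(y, x) ^ p dν`, and
`∫ d(y, x) ^ p dν ≤ 2 ^ (p - 1) (d(y, x₁) ^ p + m)` where `m` is the `p`-th moment of `ν` about
`x₁`. Taking `ε` of order `1 / (1 + d(y, x₁) ^ p)` keeps the mixture in the ball, and the bound
`(1 - ε) S + ε f(y) ≤ M` then gives `f(y) ≲ 1 + d(y, x₁) ^ p`.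
-/

theorem exists_simpleFunc_lintegral_edist_rpow_lt {X : Type*} [PseudoEMetricSpace X]
    [SeparableSpace X] [MeasurableSpace X] [OpensMeasurableSpace X] {ν : Measure X} {p : ℝ}
    (hp : 0 < p) {x₁ : X} (hν : ∫⁻ x, edist x x₁ ^ p ∂ν ≠ ∞) {η : ℝ≥0∞} (hη : 0 < η) :
    ∃ T : SimpleFunc X X, ∫⁻ x, edist (T x) x ^ p ∂ν < η := by
  let T := SimpleFunc.approxOn id measurable_id Set.univ x₁ (Set.mem_univ _)
  have hT : ∀ x, Tendsto (fun n => edist (T n x) x ^ p) atTop (𝓝 0) := fun x => by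
    have h := SimpleFunc.tendsto_approxOn measurable_id (Set.mem_univ x₁) (x := x) (by simp)
    simpa [Function.comp_def, ENNReal.zero_rpow_of_pos hp] using
      ((ENNReal.continuous_rpow_const (y := p)).tendsto 0).comp (tendsto_iff_edist_tendsto_0.1 h)
  have hlim : Tendsto (fun n => ∫⁻ x, edist (T n x) x ^ p ∂ν) atTop (𝓝 (∫⁻ _, 0 ∂ν)) := by
    refine tendsto_lintegral_of_dominated_convergence (fun x => edist x x₁ ^ p)
      (fun n => ((T n).measurable.edist measurable_id).pow_const p)
      (fun n => ae_of_all _ fun x => ?_) hν (ae_of_all _ hT)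
    dsimp only
    rw [edist_comm x x₁]
    gcongr
    exact SimpleFunc.edist_approxOn_le measurable_id _ x n
  rw [lintegral_zero] at hlim
  obtain ⟨n, hn⟩ := (hlim.eventually_lt_const hη).exists
  exact ⟨T n, hn⟩

section transport
variable {X : Type*} [PseudoEMetricSpace X] [MeasurableSpace X] {p : ℝ}

theorem Wp_rpow_le_of_mem_couplings (hp : 0 < p) {μ ν : Measure X} {γ : Measure (X × X)}
    (hγ : γ ∈ Couplings μ ν) : Wp p μ ν ^ p ≤ ∫⁻ z, edist z.1 z.2 ^ p ∂γ :=
  calc Wp p μ ν ^ p ≤ ((∫⁻ z, edist z.1 z.2 ^ p ∂γ) ^ (1 / p)) ^ p := by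
        gcongr; exact iInf₂_le γ hγ
    _ = ∫⁻ z, edist z.1 z.2 ^ p ∂γ := by
        rw [← ENNReal.rpow_mul, one_div_mul_cancel hp.ne', ENNReal.rpow_one]

theorem lintegral_edist_rpow_le (ν : Measure X) [IsProbabilityMeasure ν] (hp : 1 ≤ p)
    (y x₁ : X) :
    ∫⁻ x, edist y x ^ p ∂ν ≤ 2 ^ (p - 1) * (edist y x₁ ^ p + ∫⁻ x, edist x x₁ ^ p ∂ν) :=
  calc ∫⁻ x, edist y x ^ p ∂ν ≤ ∫⁻ x, 2 ^ (p - 1) * (edist y x₁ ^ p + edist x x₁ ^ p) ∂ν :=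
        lintegral_mono fun x => (ENNReal.rpow_le_rpow (edist_triangle_right y x x₁)
          (by linarith)).trans (ENNReal.rpow_add_le_mul_rpow_add_rpow _ _ hp)
    _ = 2 ^ (p - 1) * (edist y x₁ ^ p + ∫⁻ x, edist x x₁ ^ p ∂ν) := by
        rw [lintegral_const_mul' _ _ (by simp), lintegral_add_left measurable_const,
          lintegral_const, measure_univ, mul_one]

variable [SecondCountableTopology X] [OpensMeasurableSpace X]

theorem Wp_rpow_smul_map_add_smul_map_le (hp : 0 < p) (ν : Measure X) {S T : X → X}
    (hS : Measurable S) (hT : Measurable T) {a b : ℝ≥0∞} (hab : a + b = 1) :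
    Wp p (a • ν.map S + b • ν.map T) ν ^ p ≤
      a * ∫⁻ x, edist (S x) x ^ p ∂ν + b * ∫⁻ x, edist (T x) x ^ p ∂ν := by
  have hS' : Measurable fun x => (S x, x) := hS.prodMk measurable_id
  have hT' : Measurable fun x => (T x, x) := hT.prodMk measurable_id
  have hγ : a • ν.map (fun x => (S x, x)) + b • ν.map (fun x => (T x, x)) ∈
      Couplings (a • ν.map S + b • ν.map T) ν := by
    constructor
    · rw [Measure.map_add _ _ measurable_fst, Measure.map_smul, Measure.map_smul,
        Measure.map_map measurable_fst hS', Measure.map_map measurable_fst hT']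
      rfl
    · rw [Measure.map_add _ _ measurable_snd, Measure.map_smul, Measure.map_smul,
        Measure.map_map measurable_snd hS', Measure.map_map measurable_snd hT']
      change a • ν.map id + b • ν.map id = ν
      rw [← add_smul, hab, one_smul, Measure.map_id]
  refine (Wp_rpow_le_of_mem_couplings hp hγ).trans_eq ?_
  have hc : Measurable fun z : X × X => edist z.1 z.2 ^ p := measurable_edist.pow_const p
  rw [lintegral_add_measure, lintegral_smul_measure, lintegral_smul_measure, lintegral_map hc hS',
    lintegral_map hc hT', smul_eq_mul, smul_eq_mul]

end transport

theorem lintegral_edist_rpow_le_ofReal {X : Type*} [PseudoMetricSpace X] [MeasurableSpace X]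
    {p : ℝ} (ν : Measure X) [IsProbabilityMeasure ν] (hp : 1 ≤ p) {x₁ : X}
    (hν : ∫⁻ x, edist x x₁ ^ p ∂ν ≠ ∞) (y : X) :
    ∫⁻ x, edist y x ^ p ∂ν ≤
      ENNReal.ofReal (2 ^ (p - 1) * (dist y x₁ ^ p + (∫⁻ x, edist x x₁ ^ p ∂ν).toReal)) := by
  refine (lintegral_edist_rpow_le ν hp y x₁).trans_eq ?_
  rw [ENNReal.ofReal_mul (by positivity), ENNReal.ofReal_add (by positivity) toReal_nonneg,
    ENNReal.ofReal_toReal hν, ← ENNReal.ofReal_rpow_of_nonneg dist_nonneg (by linarith),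
    ← edist_dist, ← ENNReal.ofReal_rpow_of_nonneg zero_le_two (by linarith), ENNReal.ofReal_ofNat]

theorem integral_smul_map_add_smul_dirac {X : Type*} [MeasurableSpace X]
    [MeasurableSingletonClass X] {ν : Measure X} [IsFiniteMeasure ν] {f : X → ℝ}
    (hf : Measurable f) (T : SimpleFunc X X) (y : X) {ε : ℝ} (h0 : 0 ≤ ε) (h1 : ε ≤ 1) :
    ∫ x, f x ∂(ENNReal.ofReal (1 - ε) • ν.map T + ENNReal.ofReal ε • Measure.dirac y) =
      (1 - ε) * ∫ x, f (T x) ∂ν + ε * f y := by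
  have hT : Integrable f (ν.map T) :=
    (integrable_map_measure hf.aestronglyMeasurable T.measurable.aemeasurable).2
      (T.map f).integrable_of_isFiniteMeasure
  rw [integral_add_measure (hT.smul_measure ofReal_ne_top)
      ((integrable_dirac (by simp)).smul_measure ofReal_ne_top),
    integral_smul_measure, integral_smul_measure, ENNReal.toReal_ofReal (by linarith),
    ENNReal.toReal_ofReal h0, integral_map T.measurable.aemeasurable hf.aestronglyMeasurable,
    integral_dirac, smul_eq_mul, smul_eq_mul]

theorem le_mul_one_add_div_of_forall_le {S M a L K : ℝ} (hL : 0 < L) (hK : 0 ≤ K)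
    (h : ∀ ε : ℝ, 0 < ε → ε ≤ 1 → ε * K ≤ L → (1 - ε) * S + ε * a ≤ M) :
    a ≤ (|M| + |S|) * (1 + K / L) := by
  have hLK : 0 < L + K := by linarith
  set ε := L / (L + K) with hε
  have h0 : 0 < ε := div_pos hL hLK
  have h1 : ε ≤ 1 := (div_le_one hLK).2 (by linarith)
  have hεK : ε * K ≤ L := by
    rw [hε, div_mul_eq_mul_div, div_le_iff₀ hLK]; nlinarith
  have hεa : ε * a ≤ |M| + |S| := by
    have := h ε h0 h1 hεK
    nlinarith [le_abs_self M, neg_abs_le S, abs_nonneg S]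
  calc a ≤ (|M| + |S|) / ε := by rw [le_div_iff₀ h0]; linarith
    _ = (|M| + |S|) * (1 + K / L) := by rw [hε]; field_simp

theorem one_sub_mul_integral_comp_add_mul_le {X : Type*} [PseudoEMetricSpace X]
    [SecondCountableTopology X] [MeasurableSpace X] [OpensMeasurableSpace X]
    [MeasurableSingletonClass X] {ν : Measure X} [IsProbabilityMeasure ν] {p r M : ℝ}
    {f : X → ℝ} (hp : 0 < p) (hr : 0 ≤ r) (hf : Measurable f)
    (hbdd : ∀ μ : Measure X, IsProbabilityMeasure μ → Wp p μ ν ≤ ENNReal.ofReal r →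
      ∫ x, f x ∂μ ≤ M)
    (T : SimpleFunc X X) (hT : ∫⁻ x, edist (T x) x ^ p ∂ν ≤ ENNReal.ofReal (r ^ p / 2))
    {y : X} {K : ℝ} (hy : ∫⁻ x, edist y x ^ p ∂ν ≤ ENNReal.ofReal K) {ε : ℝ} (h0 : 0 ≤ ε)
    (h1 : ε ≤ 1) (hεK : ε * K ≤ r ^ p / 2) :
    (1 - ε) * ∫ x, f (T x) ∂ν + ε * f y ≤ M := by
  have hab : ENNReal.ofReal (1 - ε) + ENNReal.ofReal ε = 1 := by
    rw [← ENNReal.ofReal_add (by linarith) h0, sub_add_cancel, ENNReal.ofReal_one]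
  set μ := ENNReal.ofReal (1 - ε) • ν.map T + ENNReal.ofReal ε • Measure.dirac y
  have hμ : IsProbabilityMeasure μ := by
    have := Measure.isProbabilityMeasure_map (μ := ν) T.measurable.aemeasurable
    constructor
    simp [μ, hab]
  have hW : Wp p μ ν ≤ ENNReal.ofReal r := by
    have hdirac : Measure.dirac y = ν.map fun _ => y := by
      rw [Measure.map_const, measure_univ, one_smul]
    rw [← ENNReal.rpow_le_rpow_iff hp, ENNReal.ofReal_rpow_of_nonneg hr hp.le]
    calc Wp p μ ν ^ p ≤ ENNReal.ofReal (1 - ε) * ∫⁻ x, edist (T x) x ^ p ∂ν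
          + ENNReal.ofReal ε * ∫⁻ x, edist y x ^ p ∂ν := by
          simpa only [← hdirac] using
            Wp_rpow_smul_map_add_smul_map_le hp ν T.measurable (measurable_const (a := y)) hab
      _ ≤ 1 * ENNReal.ofReal (r ^ p / 2) + ENNReal.ofReal (ε * K) := by
          rw [ENNReal.ofReal_mul h0]
          gcongr
          exact ENNReal.ofReal_le_one.2 (by linarith)
      _ ≤ 1 * ENNReal.ofReal (r ^ p / 2) + ENNReal.ofReal (r ^ p / 2) := by gcongr
      _ = ENNReal.ofReal (r ^ p) := by
          rw [one_mul, ← ENNReal.ofReal_add (by positivity) (by positivity), add_halves]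
  rw [← integral_smul_map_add_smul_dirac hf T y h0 h1]
  exact hbdd μ hμ hW

theorem stmt8_general {X : Type*} [MetricSpace X] [TopologicalSpace.SeparableSpace X]
    [MeasurableSpace X] [BorelSpace X]
    (p r : ℝ) (hp : 1 ≤ p) (hr : 0 < r)
    (ν : Measure X) [IsProbabilityMeasure ν]
    (hν : ∃ x₁ : X, ∫⁻ x, edist x x₁ ^ p ∂ν ≠ ⊤)
    (f : X → ℝ) (hf : UpperSemicontinuous f)
    (M : ℝ)
    (hbdd : ∀ μ : Measure X, IsProbabilityMeasure μ → Wp p μ ν ≤ ENNReal.ofReal r →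
      ∫ x, f x ∂μ ≤ M) :
    ∃ x₀ : X, ∃ c > (0 : ℝ), ∀ x, f x ≤ c * (1 + dist x x₀ ^ p) := by
  have hp0 : 0 < p := by linarith
  have hL : 0 < r ^ p / 2 := by positivity
  obtain ⟨x₁, hm⟩ := hν
  obtain ⟨T, hT⟩ := exists_simpleFunc_lintegral_edist_rpow_lt hp0 hm (ENNReal.ofReal_pos.2 hL)
  set S := ∫ x, f (T x) ∂ν
  set m := (∫⁻ x, edist x x₁ ^ p ∂ν).toReal
  set a := 2 ^ (p - 1) / (r ^ p / 2)
  have key : ∀ y, f y ≤ (|M| + |S|) * (1 + a * (dist y x₁ ^ p + m)) := fun y => by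
    have := le_mul_one_add_div_of_forall_le hL (by positivity) fun ε h0 h1 hεK =>
      one_sub_mul_integral_comp_add_mul_le hp0 hr.le hf.measurable hbdd T hT.le
        (lintegral_edist_rpow_le_ofReal ν hp hm y) h0.le h1 hεK
    rwa [mul_div_right_comm] at this
  refine ⟨x₁, (|M| + |S| + 1) * (1 + a * (1 + m)), by positivity, fun y => (key y).trans ?_⟩
  have hd : 0 ≤ dist y x₁ ^ p := by positivity
  have ha : 0 ≤ a := by positivity
  have hm0 : 0 ≤ m := toReal_nonneg
  calc (|M| + |S|) * (1 + a * (dist y x₁ ^ p + m))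
      ≤ (|M| + |S|) * ((1 + a * (1 + m)) * (1 + dist y x₁ ^ p)) := by
        gcongr; nlinarith [mul_nonneg (mul_nonneg ha hm0) hd]
    _ ≤ (|M| + |S| + 1) * ((1 + a * (1 + m)) * (1 + dist y x₁ ^ p)) :=
        mul_le_mul_of_nonneg_right (by linarith) (by positivity)
    _ = (|M| + |S| + 1) * (1 + a * (1 + m)) * (1 + dist y x₁ ^ p) := by ring

/-- Conversely, if the objective values `∫ f dμ` over the Wasserstein ball `B_r(ν)` (with `r > 0`)
are bounded above (the integrals being well defined on the ball), then `f` satisfies the growth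
condition `f(x) ≤ c (1 + d(x, x₀)^p)` for some `x₀ ∈ X` and `c > 0`. -/
theorem stmt8 {X : Type*} [MetricSpace X] [CompleteSpace X] [TopologicalSpace.SeparableSpace X]
    [ProperSpace X] [MeasurableSpace X] [BorelSpace X]
    (p r : ℝ) (hp : 1 ≤ p) (hr : 0 < r)
    (ν : Measure X) [IsProbabilityMeasure ν]
    (hν : ∃ x₁ : X, ∫⁻ x, edist x x₁ ^ p ∂ν ≠ ⊤)
    (f : X → ℝ) (hf : UpperSemicontinuous f)
    (hwd : ∀ μ : Measure X, IsProbabilityMeasure μ → Wp p μ ν ≤ ENNReal.ofReal r →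
      Integrable (fun x => max (f x) 0) μ ∨ Integrable (fun x => max (-f x) 0) μ)
    (M : ℝ)
    (hbdd : ∀ μ : Measure X, IsProbabilityMeasure μ → Wp p μ ν ≤ ENNReal.ofReal r →
      ∫ x, f x ∂μ ≤ M) :
    ∃ x₀ : X, ∃ c > (0 : ℝ), ∀ x, f x ≤ c * (1 + dist x x₀ ^ p) :=
  stmt8_general p r hp hr ν hν f hf M hbdd
end

section
/- Let X be a Polish space and N ≥ 1. The set D_N(X) of Borel probability measures on X supported on at most N points is weakly closed in P(X): if measures μ_k, each a convex combination of at most N Dirac measures, converge weakly to μ, then μ is also a convex combination of at most N Dirac measures. -/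
open MeasureTheory ENNReal Set Filter Topology

/-- For an open set `U`, the set of probability measures giving positive mass to `U` is open
in the topology of weak convergence. -/
lemma aux_open_pos_stmt18 {X : Type*} [MetricSpace X] [MeasurableSpace X] [BorelSpace X]
    {U : Set X} (hU : IsOpen U) :
    IsOpen {ν : ProbabilityMeasure X | 0 < (ν : Measure X) U} := by
  rw [isOpen_iff_mem_nhds]
  intro μ hμ
  have key : (μ : Measure X) U ≤
      (𝓝 μ).liminf fun ν : ProbabilityMeasure X => (ν : Measure X) U :=
    ProbabilityMeasure.le_liminf_measure_open_of_tendsto (μs := id) tendsto_id hU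
  have h0 : (0 : ℝ≥0∞) <
      (𝓝 μ).liminf fun ν : ProbabilityMeasure X => (ν : Measure X) U :=
    lt_of_lt_of_le hμ key
  filter_upwards [Filter.eventually_lt_of_lt_liminf h0] with ν hν using hν

/-- The set of Borel probability measures supported on at most `N` points is weakly closed in the
space of probability measures on a Polish space. -/
theorem stmt18 {X : Type*} [MetricSpace X] [CompleteSpace X] [TopologicalSpace.SeparableSpace X]
    [MeasurableSpace X] [BorelSpace X] (N : ℕ) (hN : 1 ≤ N) :
    IsClosed {μ : ProbabilityMeasure X | ∃ (β : Fin N → NNReal) (z : Fin N → X),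
      ∑ i, β i = 1 ∧ (μ : Measure X) = ∑ i, (β i : ℝ≥0∞) • Measure.dirac (z i)} := by
  classical
  rw [← isOpen_compl_iff, isOpen_iff_mem_nhds]
  intro μ hμ
  simp only [Set.mem_compl_iff, Set.mem_setOf_eq] at hμ
  have hne : Nonempty X := μ.nonempty
  -- the union of all open μ-null sets
  set B : Set X := ⋃₀ {U : Set X | IsOpen U ∧ (μ : Measure X) U = 0} with hBdef
  have hB0 : (μ : Measure X) B = 0 := by
    obtain ⟨T, hTc, hTeq⟩ := TopologicalSpace.isOpen_iUnion_countable
      (fun U : {U : Set X // IsOpen U ∧ (μ : Measure X) U = 0} => (U : Set X))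
      (fun U => U.2.1)
    have hBeq : B = ⋃ U ∈ T, (U : Set X) := by
      rw [hTeq, hBdef]
      ext y
      simp only [Set.mem_sUnion, Set.mem_iUnion, Set.mem_setOf_eq]
      constructor
      · rintro ⟨U, ⟨hUo, hU0⟩, hyU⟩
        exact ⟨⟨U, hUo, hU0⟩, hyU⟩
      · rintro ⟨U, hyU⟩
        exact ⟨U, U.2, hyU⟩
    rw [hBeq]
    exact (measure_biUnion_null_iff hTc).2 fun U _ => U.2.2
  set S : Set X := Bᶜ with hSdef
  have hSP : ∀ x ∈ S, ∀ V : Set X, IsOpen V → x ∈ V → 0 < (μ : Measure X) V := by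
    intro x hx V hVo hxV
    rcases eq_zero_or_pos ((μ : Measure X) V) with h | h
    · exact absurd (show x ∈ B from Set.mem_sUnion.2 ⟨V, ⟨hVo, h⟩, hxV⟩) hx
    · exact h
  by_cases hbig : ∃ x : Fin (N + 1) → X, Function.Injective x ∧ ∀ i, x i ∈ S
  · -- there are N+1 support points: build an open neighborhood avoiding the set
    obtain ⟨x, xinj, xS⟩ := hbig
    -- minimal pairwise distance
    obtain ⟨p, hp, hmin⟩ := Finset.exists_min_image
      (Finset.univ.filter fun p : Fin (N + 1) × Fin (N + 1) => p.1 ≠ p.2)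
      (fun p => dist (x p.1) (x p.2))
      ⟨(⟨0, by omega⟩, ⟨1, by omega⟩), by
        simp only [Finset.mem_filter, Finset.mem_univ, true_and, ne_eq]
        intro h
        have := congrArg Fin.val h
        simp at this⟩
    set d : ℝ := dist (x p.1) (x p.2) with hddef
    have hpne : p.1 ≠ p.2 := by simpa using (Finset.mem_filter.1 hp).2
    have dpos : 0 < d := dist_pos.2 fun h => hpne (xinj h)
    have hd : ∀ i j, i ≠ j → d ≤ dist (x i) (x j) := by
      intro i j hij
      exact hmin (i, j) (by simpa using hij)
    set U : Fin (N + 1) → Set X := fun i => Metric.ball (x i) (d / 2) with hUdef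
    have hW : ∀ i, 0 < (μ : Measure X) (U i) := fun i =>
      hSP _ (xS i) _ Metric.isOpen_ball (Metric.mem_ball_self (by positivity))
    refine Filter.mem_of_superset
      (IsOpen.mem_nhds (isOpen_iInter_of_finite fun i =>
        aux_open_pos_stmt18 (Metric.isOpen_ball (x := x i) (ε := d / 2)))
        (Set.mem_iInter.2 hW)) ?_
    intro ν hν
    simp only [Set.mem_iInter, Set.mem_setOf_eq] at hν
    simp only [Set.mem_compl_iff, Set.mem_setOf_eq]
    rintro ⟨β, z, hsum, heq⟩
    have hzU : ∀ i, ∃ j : Fin N, z j ∈ U i := by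
      intro i
      have hpos := hν i
      rw [heq] at hpos
      rw [Measure.finset_sum_apply] at hpos
      obtain ⟨j, -, hj⟩ := Finset.exists_ne_zero_of_sum_ne_zero hpos.ne'
      refine ⟨j, ?_⟩
      by_contra hmem
      apply hj
      rw [Measure.smul_apply, smul_eq_mul,
        Measure.dirac_apply' _ Metric.isOpen_ball.measurableSet,
        Set.indicator_of_notMem hmem, mul_zero]
    choose j hj using hzU
    have jinj : Function.Injective j := by
      intro i₁ i₂ hj12
      by_contra hne12
      have h1 : z (j i₁) ∈ U i₁ := hj i₁
      have h2 : z (j i₁) ∈ U i₂ := by rw [hj12]; exact hj i₂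
      have hd12 : d ≤ dist (x i₁) (x i₂) := hd _ _ hne12
      have b1 : dist (z (j i₁)) (x i₁) < d / 2 := Metric.mem_ball.1 h1
      have b2 : dist (z (j i₁)) (x i₂) < d / 2 := Metric.mem_ball.1 h2
      have := dist_triangle (x i₁) (z (j i₁)) (x i₂)
      rw [dist_comm (x i₁) (z (j i₁))] at this
      linarith
    have := Fintype.card_le_of_injective j jinj
    simp only [Fintype.card_fin] at this
    omega
  · -- the "support" S has at most N points, so μ is in the set: contradiction
    exfalso
    apply hμ
    push_neg at hbig
    have hSfin : S.Finite := by
      by_contra h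
      have hinf : S.Infinite := h
      obtain ⟨t, hts, htc⟩ := hinf.exists_subset_card_eq (N + 1)
      set e := t.equivFin
      obtain ⟨i, hi⟩ := hbig (fun i => (e.symm (Fin.cast htc.symm i) : X))
        (by
          intro a b hab
          have h2 : e.symm (Fin.cast htc.symm a) = e.symm (Fin.cast htc.symm b) :=
            Subtype.val_injective hab
          exact Fin.cast_injective _ (e.symm.injective h2))
      exact hi (hts (e.symm (Fin.cast htc.symm i)).2)
    set s : Finset X := hSfin.toFinset with hsdef
    have hscard : s.card ≤ N := by
      by_contra h
      push_neg at h
      obtain ⟨t, hts, htc⟩ := s.exists_subset_card_eq (n := N + 1) (by omega)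
      set e := t.equivFin
      obtain ⟨i, hi⟩ := hbig (fun i => (e.symm (Fin.cast htc.symm i) : X))
        (by
          intro a b hab
          have h2 : e.symm (Fin.cast htc.symm a) = e.symm (Fin.cast htc.symm b) :=
            Subtype.val_injective hab
          exact Fin.cast_injective _ (e.symm.injective h2))
      exact hi (hSfin.mem_toFinset.1 (hts (e.symm (Fin.cast htc.symm i)).2))
    set e := s.equivFin with hedef
    set z : Fin N → X := fun i =>
      if h : (i : ℕ) < s.card then (e.symm ⟨i, h⟩ : X) else Classical.arbitrary X with hzdef
    set β : Fin N → NNReal := fun i =>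
      if (i : ℕ) < s.card then ((μ : Measure X) {z i}).toNNReal else 0 with hβdef
    have heq : (μ : Measure X) = ∑ i, (β i : ℝ≥0∞) • Measure.dirac (z i) := by
      ext A hA
      rw [Measure.finset_sum_apply]
      -- LHS : μ A = μ (A ∩ S)
      have h1 : (μ : Measure X) A = (μ : Measure X) (A ∩ S) := by
        apply le_antisymm
        · calc (μ : Measure X) A ≤ (μ : Measure X) ((A ∩ S) ∪ B) := by
                apply measure_mono
                intro y hy
                by_cases hyB : y ∈ B
                · exact Or.inr hyB
                · exact Or.inl ⟨hy, hyB⟩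
            _ ≤ (μ : Measure X) (A ∩ S) + (μ : Measure X) B := measure_union_le _ _
            _ = (μ : Measure X) (A ∩ S) := by rw [hB0, add_zero]
        · exact measure_mono Set.inter_subset_left
      have h2 : A ∩ S = ↑(s.filter (· ∈ A)) := by
        ext y
        simp only [Set.mem_inter_iff, Finset.coe_filter, Set.mem_setOf_eq,
          hsdef, Set.Finite.mem_toFinset]
        tauto
      have h3 : (μ : Measure X) ↑(s.filter (· ∈ A)) =
          ∑ y ∈ s.filter (· ∈ A), (μ : Measure X) {y} := by
        have hrw : (↑(s.filter (· ∈ A)) : Set X) = ⋃ y ∈ s.filter (· ∈ A), ({y} : Set X) := by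
          ext w; simp
        rw [hrw, measure_biUnion_finset]
        · intro a _ b _ hab
          simpa [Function.onFun] using Set.disjoint_singleton.2 hab
        · intro b _
          exact measurableSet_singleton b
      rw [h1, h2, h3, Finset.sum_filter]
      -- now handle the right-hand side
      have hrhs : ∀ i : Fin N,
          ((β i : ℝ≥0∞) • Measure.dirac (z i)) A =
            if (z i) ∈ A then (β i : ℝ≥0∞) else 0 := by
        intro i
        rw [Measure.smul_apply, smul_eq_mul, Measure.dirac_apply' _ hA, Set.indicator_apply]
        by_cases h : z i ∈ A <;> simp [h]
      simp only [hrhs]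
      -- restrict the RHS sum to indices < s.card
      set emb : Fin s.card ↪ Fin N := ⟨Fin.castLE hscard, Fin.castLE_injective hscard⟩
        with hembdef
      rw [show (Finset.univ : Finset (Fin N)) =
          Finset.univ.map emb ∪ (Finset.univ \ Finset.univ.map emb) by
        rw [Finset.union_sdiff_of_subset (Finset.subset_univ _)]]
      rw [Finset.sum_union (Finset.disjoint_sdiff)]
      have hzero : ∑ i ∈ Finset.univ \ Finset.univ.map emb,
          (if (z i) ∈ A then (β i : ℝ≥0∞) else 0) = 0 := by
        apply Finset.sum_eq_zero
        intro i hi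
        have hige : ¬ ((i : ℕ) < s.card) := by
          intro hlt
          have hmem : i ∈ Finset.univ.map emb :=
            Finset.mem_map.2 ⟨⟨(i : ℕ), hlt⟩, Finset.mem_univ _, Fin.ext rfl⟩
          exact (Finset.mem_sdiff.1 hi).2 hmem
        have : β i = 0 := by rw [hβdef]; simp [hige]
        simp [this]
      rw [hzero, add_zero, Finset.sum_map]
      -- now both sides are sums over Fin s.card / over s
      have hterm : ∀ jc : Fin s.card,
          (if (z (emb jc)) ∈ A then ((β (emb jc) : ℝ≥0∞)) else 0) =
            (if ((e.symm jc : X)) ∈ A then (μ : Measure X) {(e.symm jc : X)} else 0) := by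
        intro jc
        have hlt : ((emb jc : Fin N) : ℕ) < s.card := jc.isLt
        have hz : z (emb jc) = (e.symm jc : X) := by
          simp only [hzdef]
          rw [dif_pos hlt]
          have hjc : (⟨((emb jc : Fin N) : ℕ), hlt⟩ : Fin s.card) = jc := Fin.ext rfl
          rw [hjc]
        have hβ : (β (emb jc) : ℝ≥0∞) = (μ : Measure X) {z (emb jc)} := by
          simp only [hβdef]
          rw [if_pos hlt]
          exact ENNReal.coe_toNNReal (measure_ne_top _ _)
        rw [hβ, hz]
      simp only [hterm]
      -- change the LHS sum over s into a sum over Fin s.card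
      rw [← Finset.sum_coe_sort s (fun y => if y ∈ A then (μ : Measure X) {y} else 0)]
      rw [← Equiv.sum_comp e.symm
        (fun a : {y // y ∈ s} => if (a : X) ∈ A then (μ : Measure X) {(a : X)} else 0)]
    refine ⟨β, z, ?_, heq⟩
    have huniv := congrArg (fun m : Measure X => m Set.univ) heq
    simp only [Measure.finset_sum_apply, Measure.smul_apply, smul_eq_mul,
      Measure.dirac_apply' _ MeasurableSet.univ, Set.indicator_univ, Pi.one_apply,
      mul_one, measure_univ] at huniv
    have : ((∑ i, β i : NNReal) : ℝ≥0∞) = 1 := by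
      push_cast
      exact huniv.symm
    exact_mod_cast this
end
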